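/- Let n₁, n₂ ≥ 1, l ∈ ℕ, 0 < q_i < p_i ≤ 1 and 0 ≤ α_i ≤ β_i for i = 1,2. Then the bivariate (p,q)-Schurer–Stancu operator applied to the constant function e_{00}(t₁,t₂) = 1 satisfies S(e_{00}; x₁, x₂) = 1 for all real x₁, x₂. -/
import Mathlib


open Finset

/-- The (p,q)-integer `[k]_{p,q} = (p^k - q^k)/(p - q)`. -/
noncomputable def pqInt (p q : ℝ) (k : ℕ) : ℝ := (p ^ k - q ^ k) / (p - q)

/-- The (p,q)-factorial `[n]_{p,q}! = ∏_{k=1}^n [k]_{p,q}`. -/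
noncomputable def pqFact (p q : ℝ) (n : ℕ) : ℝ := ∏ k ∈ Finset.Icc 1 n, pqInt p q k

/-- The (p,q)-binomial coefficient `C(n,k)_{p,q}`. -/
noncomputable def pqBinom (p q : ℝ) (n k : ℕ) : ℝ :=
  pqFact p q n / (pqFact p q k * pqFact p q (n - k))

/-- The (p,q)-Schurer basis function `s_{n,l,ν}^{p,q}(x)`. -/
noncomputable def schurerBasis (p q : ℝ) (n l ν : ℕ) (x : ℝ) : ℝ :=
  (1 / p ^ ((n + l) * (n + l - 1) / 2)) * pqBinom p q (n + l) ν *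
    p ^ (ν * (ν - 1) / 2) * x ^ ν * ∏ j ∈ Finset.range (n + l - ν), (p ^ j - q ^ j * x)

/-- The Stancu node `T(ν) = (p^{n-ν}·[ν]_{p,q} + α)/([n]_{p,q} + β)`. -/
noncomputable def stancuNode (p q α β : ℝ) (n ν : ℕ) : ℝ :=
  (p ^ ((n : ℤ) - (ν : ℤ)) * pqInt p q ν + α) / (pqInt p q n + β)

/-- The bivariate (p,q)-Schurer–Stancu operator. -/
noncomputable def schurerStancu (n₁ n₂ l : ℕ) (p₁ q₁ α₁ β₁ p₂ q₂ α₂ β₂ : ℝ)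
    (f : ℝ → ℝ → ℝ) (x₁ x₂ : ℝ) : ℝ :=
  ∑ ν₁ ∈ Finset.range (n₁ + l + 1), ∑ ν₂ ∈ Finset.range (n₂ + l + 1),
    schurerBasis p₁ q₁ n₁ l ν₁ x₁ * schurerBasis p₂ q₂ n₂ l ν₂ x₂ *
      f (stancuNode p₁ q₁ α₁ β₁ n₁ ν₁) (stancuNode p₂ q₂ α₂ β₂ n₂ ν₂)

/-! ### Auxiliary lemmas -/

lemma tri_aux (m : ℕ) : m * (m - 1) / 2 + m = (m + 1) * m / 2 := by
  cases m with
  | zero => simp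
  | succ k =>
    have h : (k + 1 + 1) * (k + 1) = (k + 1) * k + (k + 1) * 2 := by ring
    simp only [Nat.succ_sub_one]
    rw [h, Nat.add_mul_div_right _ _ (by norm_num : (0:ℕ) < 2)]

lemma pqFact_zero (p q : ℝ) : pqFact p q 0 = 1 := by simp [pqFact]

section aux
variable {p q : ℝ} (hq : 0 < q) (hqp : q < p)
include hq hqp

lemma pqInt_pos {k : ℕ} (hk : 1 ≤ k) : 0 < pqInt p q k := by
  have h1 : q ^ k < p ^ k := pow_lt_pow_left₀ hqp hq.le (by omega)
  exact div_pos (by linarith) (by linarith)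

lemma pqFact_pos (n : ℕ) : 0 < pqFact p q n := by
  refine Finset.prod_pos fun k hk => pqInt_pos hq hqp ?_
  exact (Finset.mem_Icc.mp hk).1

lemma pqFact_succ (n : ℕ) : pqFact p q (n + 1) = pqFact p q n * pqInt p q (n + 1) := by
  exact Finset.prod_Icc_succ_top (by omega) _

lemma pqInt_add (a b : ℕ) :
    pqInt p q (a + b) = p ^ a * pqInt p q b + q ^ b * pqInt p q a := by
  have hpq : p - q ≠ 0 := by linarith
  unfold pqInt
  field_simp
  ring

lemma pqBinom_zero (n : ℕ) : pqBinom p q n 0 = 1 := by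
  have h := (pqFact_pos hq hqp n).ne'
  unfold pqBinom
  rw [Nat.sub_zero, pqFact_zero, one_mul, div_self h]

lemma pqBinom_self (n : ℕ) : pqBinom p q n n = 1 := by
  have h := (pqFact_pos hq hqp n).ne'
  unfold pqBinom
  rw [Nat.sub_self, pqFact_zero, mul_one, div_self h]

lemma pqBinom_pascal (k c : ℕ) :
    pqBinom p q (k + c + 2) (k + 1)
      = p ^ (k + 1) * pqBinom p q (k + c + 1) (k + 1)
        + q ^ (c + 1) * pqBinom p q (k + c + 1) k := by
  have e1 : k + c + 2 - (k + 1) = c + 1 := by omega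
  have e2 : k + c + 1 - (k + 1) = c := by omega
  have e3 : k + c + 1 - k = c + 1 := by omega
  have hFk := (pqFact_pos hq hqp k).ne'
  have hFc := (pqFact_pos hq hqp c).ne'
  have hF := (pqFact_pos hq hqp (k + c + 1)).ne'
  have hIk := (pqInt_pos hq hqp (by omega : 1 ≤ k + 1)).ne'
  have hIc := (pqInt_pos hq hqp (by omega : 1 ≤ c + 1)).ne'
  have hsplit : pqInt p q (k + c + 2)
      = p ^ (k + 1) * pqInt p q (c + 1) + q ^ (c + 1) * pqInt p q (k + 1) := by
    have h := pqInt_add hq hqp (k + 1) (c + 1)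
    rw [show k + 1 + (c + 1) = k + c + 2 from by omega] at h
    exact h
  unfold pqBinom
  rw [e1, e2, e3, show k + c + 2 = (k + c + 1) + 1 from rfl, pqFact_succ hq hqp,
    pqFact_succ hq hqp k, pqFact_succ hq hqp c, hsplit]
  field_simp

lemma sum_T (x : ℝ) (m : ℕ) :
    ∑ ν ∈ Finset.range (m + 1),
      pqBinom p q m ν * p ^ (ν * (ν - 1) / 2) * x ^ ν *
        ∏ j ∈ Finset.range (m - ν), (p ^ j - q ^ j * x)
      = p ^ (m * (m - 1) / 2) := by
  induction m with
  | zero => simp [pqBinom_zero hq hqp]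
  | succ m ih =>
    have key : ∀ ν ∈ Finset.range (m + 1),
        (p ^ ν * pqBinom p q m ν * p ^ (ν * (ν - 1) / 2) * x ^ ν *
            ∏ j ∈ Finset.range (m + 1 - ν), (p ^ j - q ^ j * x))
          + (q ^ (m - ν) * pqBinom p q m ν * p ^ ((ν + 1) * ν / 2) * x ^ (ν + 1) *
            ∏ j ∈ Finset.range (m - ν), (p ^ j - q ^ j * x))
        = p ^ m * (pqBinom p q m ν * p ^ (ν * (ν - 1) / 2) * x ^ ν *
            ∏ j ∈ Finset.range (m - ν), (p ^ j - q ^ j * x)) := by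
      intro ν hν
      obtain ⟨d, rfl⟩ : ∃ d, m = ν + d := ⟨m - ν, by
        have := Finset.mem_range.mp hν; omega⟩
      rw [show ν + d + 1 - ν = (ν + d - ν) + 1 from by omega, Finset.prod_range_succ,
        show ν + d - ν = d from by omega,
        show (ν + 1) * ν / 2 = ν * (ν - 1) / 2 + ν from (tri_aux ν).symm,
        pow_add, pow_add, show ν + d = d + ν from by omega, pow_add]
      ring
    calc ∑ ν ∈ Finset.range (m + 1 + 1),
          pqBinom p q (m + 1) ν * p ^ (ν * (ν - 1) / 2) * x ^ ν *
            ∏ j ∈ Finset.range (m + 1 - ν), (p ^ j - q ^ j * x)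
        = (∑ k ∈ Finset.range m,
            pqBinom p q (m + 1) (k + 1) * p ^ ((k + 1) * k / 2) * x ^ (k + 1) *
              ∏ j ∈ Finset.range (m - k), (p ^ j - q ^ j * x))
          + pqBinom p q (m + 1) (m + 1) * p ^ ((m + 1) * m / 2) * x ^ (m + 1)
          + pqBinom p q (m + 1) 0 *
              ∏ j ∈ Finset.range (m + 1), (p ^ j - q ^ j * x) := by
          rw [Finset.sum_range_succ' _ (m + 1), Finset.sum_range_succ]
          simp only [Nat.add_sub_cancel, Nat.succ_sub_one, Nat.sub_self,
            Finset.range_zero, Finset.prod_empty, mul_one, pow_zero, one_mul,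
            Nat.sub_zero, Nat.succ_sub_succ, Nat.zero_mul, Nat.zero_div]
      _ = (∑ k ∈ Finset.range m,
            ((p ^ (k + 1) * pqBinom p q m (k + 1) * p ^ ((k + 1) * ((k + 1) - 1) / 2)
                * x ^ (k + 1) * ∏ j ∈ Finset.range (m + 1 - (k + 1)), (p ^ j - q ^ j * x))
              + (q ^ (m - k) * pqBinom p q m k * p ^ ((k + 1) * k / 2) * x ^ (k + 1) *
                ∏ j ∈ Finset.range (m - k), (p ^ j - q ^ j * x))))
          + (q ^ (m - m) * pqBinom p q m m * p ^ ((m + 1) * m / 2) * x ^ (m + 1) *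
              ∏ j ∈ Finset.range (m - m), (p ^ j - q ^ j * x))
          + (p ^ 0 * pqBinom p q m 0 * p ^ (0 * (0 - 1) / 2) * x ^ 0 *
              ∏ j ∈ Finset.range (m + 1 - 0), (p ^ j - q ^ j * x)) := by
          congr 1
          · congr 1
            · refine Finset.sum_congr rfl fun k hk => ?_
              obtain ⟨c, rfl⟩ : ∃ c, m = k + 1 + c := ⟨m - k - 1, by
                have := Finset.mem_range.mp hk; omega⟩
              simp only [show k + 1 + c = k + c + 1 from by omega,
                show k + c + 1 + 1 = k + c + 2 from by omega,
                show k + c + 2 - (k + 1) = c + 1 from by omega,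
                show k + c + 1 - (k + 1) = c from by omega,
                show k + c + 1 - k = c + 1 from by omega, Nat.add_sub_cancel]
              rw [pqBinom_pascal hq hqp k c]
              ring
            · rw [pqBinom_self hq hqp, pqBinom_self hq hqp, Nat.sub_self]
              simp
          · rw [pqBinom_zero hq hqp, pqBinom_zero hq hqp]
            simp
      _ = ∑ ν ∈ Finset.range (m + 1),
            ((p ^ ν * pqBinom p q m ν * p ^ (ν * (ν - 1) / 2) * x ^ ν *
                ∏ j ∈ Finset.range (m + 1 - ν), (p ^ j - q ^ j * x))
              + (q ^ (m - ν) * pqBinom p q m ν * p ^ ((ν + 1) * ν / 2) * x ^ (ν + 1) *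
                ∏ j ∈ Finset.range (m - ν), (p ^ j - q ^ j * x))) := by
          rw [Finset.sum_add_distrib]
          conv_rhs => rw [Finset.sum_add_distrib,
            Finset.sum_range_succ'
              (fun ν => p ^ ν * pqBinom p q m ν * p ^ (ν * (ν - 1) / 2) * x ^ ν *
                ∏ j ∈ Finset.range (m + 1 - ν), (p ^ j - q ^ j * x)) m,
            Finset.sum_range_succ
              (fun ν => q ^ (m - ν) * pqBinom p q m ν * p ^ ((ν + 1) * ν / 2) * x ^ (ν + 1) *
                ∏ j ∈ Finset.range (m - ν), (p ^ j - q ^ j * x)) m]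
          ring
      _ = ∑ ν ∈ Finset.range (m + 1),
            p ^ m * (pqBinom p q m ν * p ^ (ν * (ν - 1) / 2) * x ^ ν *
              ∏ j ∈ Finset.range (m - ν), (p ^ j - q ^ j * x)) :=
          Finset.sum_congr rfl key
      _ = p ^ ((m + 1) * ((m + 1) - 1) / 2) := by
          rw [← Finset.mul_sum, ih, ← pow_add, Nat.succ_sub_one,
            show m + m * (m - 1) / 2 = (m + 1) * m / 2 from by
              rw [← tri_aux m]; omega]

lemma sum_schurerBasis (hp : p ≤ 1) (n l : ℕ) (x : ℝ) :
    ∑ ν ∈ Finset.range (n + l + 1), schurerBasis p q n l ν x = 1 := by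
  have hp0 : (0:ℝ) < p := lt_trans hq hqp
  have hpow : (p : ℝ) ^ ((n + l) * (n + l - 1) / 2) ≠ 0 := pow_ne_zero _ hp0.ne'
  unfold schurerBasis
  have h := sum_T hq hqp x (n + l)
  calc ∑ ν ∈ Finset.range (n + l + 1),
        (1 / p ^ ((n + l) * (n + l - 1) / 2)) * pqBinom p q (n + l) ν *
          p ^ (ν * (ν - 1) / 2) * x ^ ν *
          ∏ j ∈ Finset.range (n + l - ν), (p ^ j - q ^ j * x)
      = (1 / p ^ ((n + l) * (n + l - 1) / 2)) *
          ∑ ν ∈ Finset.range (n + l + 1),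
            pqBinom p q (n + l) ν * p ^ (ν * (ν - 1) / 2) * x ^ ν *
              ∏ j ∈ Finset.range (n + l - ν), (p ^ j - q ^ j * x) := by
        rw [Finset.mul_sum]; exact Finset.sum_congr rfl fun ν _ => by ring
    _ = 1 := by rw [h]; field_simp

end aux

/-- The bivariate (p,q)-Schurer–Stancu operator reproduces the constant test function
`e₀₀ = 1`: `S(e₀₀; x₁, x₂) = 1`. -/
theorem schurerStancu_e00 (n₁ n₂ l : ℕ) (hn₁ : 1 ≤ n₁) (hn₂ : 1 ≤ n₂)
    (p₁ q₁ α₁ β₁ p₂ q₂ α₂ β₂ : ℝ)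
    (hq₁ : 0 < q₁) (hq₁p : q₁ < p₁) (hp₁ : p₁ ≤ 1) (hα₁ : 0 ≤ α₁) (hαβ₁ : α₁ ≤ β₁)
    (hq₂ : 0 < q₂) (hq₂p : q₂ < p₂) (hp₂ : p₂ ≤ 1) (hα₂ : 0 ≤ α₂) (hαβ₂ : α₂ ≤ β₂)
    (x₁ x₂ : ℝ) :
    schurerStancu n₁ n₂ l p₁ q₁ α₁ β₁ p₂ q₂ α₂ β₂ (fun _ _ => 1) x₁ x₂ = 1 := by
  unfold schurerStancu
  simp only [mul_one]
  rw [← Finset.sum_mul_sum, sum_schurerBasis hq₁ hq₁p hp₁ n₁ l x₁,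
    sum_schurerBasis hq₂ hq₂p hp₂ n₂ l x₂, mul_one]
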